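/- Let m ≥ 1 and let 0 < z_1 < … < z_m be real data. If π : ℝ → ℝ is a measurable nonnegative function with ∫_ℝ π(ξ) dξ < ∞ (i.e. π is proportional to a proper density), then the GP posterior normalizing constant C_m(π; z) is finite, i.e. the posterior arising from the prior π(σ,ξ) ∝ π(ξ)/σ is proper. -/

import Mathlib

open MeasureTheory Real Set
open scoped ENNReal Classical

/-- The inner integral over the scale `σ` of the Generalized Pareto posterior
integrand, for a fixed shape `ξ`, data `z` and prior `π(σ,ξ) ∝ π(ξ)/σ`:
`∫_{max(0, -ξ z_m)}^∞ σ^{-(m+1)} ∏_{i=1}^m (1 + ξ z_i/σ)^{-(1+1/ξ)} dσ`,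
with the Gumbel interpretation `σ^{-(m+1)} exp(-(Σ_i z_i)/σ)` when `ξ = 0`. -/
noncomputable def gpInner (m : ℕ) (z : Fin m → ℝ) (ξ : ℝ) : ℝ≥0∞ :=
  ∫⁻ σ in Set.Ioi (max 0 (-ξ * ⨆ i, z i)),
    ENNReal.ofReal
      (if ξ = 0 then σ ^ (-((m : ℝ) + 1)) * Real.exp (-(∑ i, z i) / σ)
       else σ ^ (-((m : ℝ) + 1)) * ∏ i, (1 + ξ * z i / σ) ^ (-(1 + 1 / ξ)))

/-- The Generalized Pareto posterior normalizing constant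
`C_m(π; z) = ∫_ℝ π(ξ) ∫_{max(0,-ξ z_m)}^∞ σ^{-(m+1)} ∏_i (1+ξ z_i/σ)^{-(1+1/ξ)} dσ dξ`. -/
noncomputable def gpC (m : ℕ) (z : Fin m → ℝ) (p : ℝ → ℝ) : ℝ≥0∞ :=
  ∫⁻ ξ : ℝ, ENNReal.ofReal (p ξ) * gpInner m z ξ

/-!
For a fixed shape `ξ`, split the likelihood into the factor of the largest observation
`M = z_m` and the remaining ones. Each remaining factor `σ⁻¹ (1 + ξ z_i/σ)^{-(1+1/ξ)}` is
bounded on the support uniformly in `σ` and `ξ`: by `1/z_i` when `ξ ≥ -1` (Bernoulli's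
inequality, or `log x ≤ x - 1`), and by `1/(M - z_i)` when `ξ < -1` (where `σ > -ξ M`).
The factor of `M`, `σ⁻²(1 + ξ M/σ)^{-(1+1/ξ)}`, is `1/M` times the `σ`-derivative of the GP
survival function at `M`, so it integrates to at most `1/M`. Hence the inner integral is
bounded independently of `ξ`, and `C_m(π; z) < ∞` as soon as `π` is integrable.
-/

open Filter Topology

lemma setLIntegral_Ioi_le_of_hasDerivAt {f F : ℝ → ℝ} {a L : ℝ}
    (hderiv : ∀ x ∈ Ioi a, HasDerivAt F (f x) x) (hf : ∀ x ∈ Ioi a, 0 ≤ f x)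
    (hF : ∀ x ∈ Ioi a, 0 ≤ F x) (hlim : Tendsto F atTop (𝓝 L)) :
    ∫⁻ x in Ioi a, ENNReal.ofReal (f x) ≤ ENNReal.ofReal L := by
  have bound_of_lt : ∀ c, a < c → ∫⁻ x in Ioi c, ENNReal.ofReal (f x) ≤ ENNReal.ofReal L := by
    intro c hc
    have hderiv' : ∀ x ∈ Ioi c, HasDerivAt F (f x) x := fun x hx => hderiv x (hc.trans hx)
    have hf' : ∀ x ∈ Ioi c, 0 ≤ f x := fun x hx => hf x (hc.trans hx)
    have hcont : ContinuousWithinAt F (Ici c) c := (hderiv c hc).continuousAt.continuousWithinAt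
    rw [← ofReal_integral_eq_lintegral_ofReal
        (integrableOn_Ioi_deriv_of_nonneg hcont hderiv' hf' hlim)
        ((ae_restrict_iff' measurableSet_Ioi).2 (ae_of_all _ hf')),
      integral_Ioi_of_hasDerivAt_of_nonneg hcont hderiv' hf' hlim]
    exact ENNReal.ofReal_le_ofReal (by linarith [hF c hc])
  have hunion : Ioi a = ⋃ n : ℕ, Ioi (a + 1 / ((n : ℝ) + 1)) := by
    ext x
    simp only [mem_Ioi, mem_iUnion]
    constructor
    · intro hx
      obtain ⟨n, hn⟩ := exists_nat_one_div_lt (sub_pos.2 hx)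
      exact ⟨n, by linarith⟩
    · rintro ⟨n, hn⟩
      have : (0 : ℝ) < 1 / ((n : ℝ) + 1) := Nat.one_div_pos_of_nat
      linarith
  have hmono : Monotone fun n : ℕ => Ioi (a + 1 / ((n : ℝ) + 1)) := fun n k hnk =>
    Ioi_subset_Ioi (by gcongr)
  rw [hunion, setLIntegral_iUnion_of_directed _ hmono.directed_le]
  exact iSup_le fun n => bound_of_lt _ (lt_add_of_pos_right a Nat.one_div_pos_of_nat)

/-- `σ` times the `GP(σ, ξ)` density at `w`. -/
noncomputable def gpKernel (ξ w σ : ℝ) : ℝ :=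
  if ξ = 0 then exp (-w / σ) else (1 + ξ * w / σ) ^ (-(1 + 1 / ξ))

/-- The `GP(σ, ξ)` survival function at `w`. -/
noncomputable def gpTail (ξ w σ : ℝ) : ℝ :=
  if ξ = 0 then exp (-w / σ) else (1 + ξ * w / σ) ^ (-(1 / ξ))

lemma one_add_mul_div_pos {ξ w M σ : ℝ} (hw : 0 < w) (hwM : w ≤ M)
    (hσ : max 0 (-ξ * M) < σ) : 0 < 1 + ξ * w / σ := by
  have hσ0 : 0 < σ := (le_max_left _ _).trans_lt hσ
  have hξM : -ξ * M < σ := (le_max_right _ _).trans_lt hσ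
  rw [show 1 + ξ * w / σ = (σ + ξ * w) / σ by field_simp]
  refine div_pos ?_ hσ0
  rcases le_or_gt 0 ξ with hξ | hξ
  · positivity
  · nlinarith

lemma gpKernel_nonneg {ξ w σ : ℝ} (hb : 0 < 1 + ξ * w / σ) : 0 ≤ gpKernel ξ w σ := by
  unfold gpKernel; split_ifs
  exacts [(exp_pos _).le, rpow_nonneg hb.le _]

lemma gpTail_nonneg {ξ w σ : ℝ} (hb : 0 < 1 + ξ * w / σ) : 0 ≤ gpTail ξ w σ := by
  unfold gpTail; split_ifs
  exacts [(exp_pos _).le, rpow_nonneg hb.le _]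

lemma gpTail_zero (w : ℝ) : gpTail 0 w = fun σ => exp (-(w / σ)) :=
  funext fun σ => by simp [gpTail, neg_div]

lemma gpTail_of_ne_zero {ξ : ℝ} (hξ : ξ ≠ 0) (w : ℝ) :
    gpTail ξ w = fun σ => (1 + ξ * (w / σ)) ^ (-(1 / ξ)) :=
  funext fun σ => by simp [gpTail, hξ, mul_div_assoc]

lemma hasDerivAt_gpTail {ξ w σ : ℝ} (hσ : σ ≠ 0) (hb : 0 < 1 + ξ * w / σ) :
    HasDerivAt (gpTail ξ w) (w / σ ^ 2 * gpKernel ξ w σ) σ := by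
  have hinv : HasDerivAt (fun s : ℝ => w / s) (-(w / σ ^ 2)) σ := by
    simpa [div_eq_mul_inv, pow_two, mul_inv] using (hasDerivAt_inv hσ).const_mul w
  rcases eq_or_ne ξ 0 with rfl | hξ
  · rw [gpTail_zero]
    refine hinv.neg.exp.congr_deriv ?_
    simp [gpKernel, neg_div, mul_comm]
  · rw [gpTail_of_ne_zero hξ]
    rw [mul_div_assoc] at hb
    refine (((hinv.const_mul ξ).const_add 1).rpow_const (p := -(1 / ξ))
      (Or.inl hb.ne')).congr_deriv ?_
    rw [show -(1 / ξ) - 1 = -(1 + 1 / ξ) by ring]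
    simp only [gpKernel, hξ, if_false, mul_div_assoc]
    field_simp

lemma tendsto_gpTail_atTop (ξ w : ℝ) : Tendsto (gpTail ξ w) atTop (𝓝 1) := by
  have h : Tendsto (fun s : ℝ => w / s) atTop (𝓝 0) := tendsto_const_nhds.div_atTop tendsto_id
  rcases eq_or_ne ξ 0 with rfl | hξ
  · simpa [gpTail_zero] using h.neg.rexp
  · simpa [gpTail_of_ne_zero hξ] using
      ((h.const_mul ξ).const_add 1).rpow_const (p := -(1 / ξ)) (by simp)

lemma div_mul_gpKernel_le_one {ξ w σ : ℝ} (hξ : -1 ≤ ξ) (hw : 0 < w) (hσ : 0 < σ)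
    (hb : 0 < 1 + ξ * w / σ) : w / σ * gpKernel ξ w σ ≤ 1 := by
  set u := w / σ with hu_def
  have hu : 0 < u := div_pos hw hσ
  rw [mul_div_assoc, ← hu_def] at hb
  rcases lt_trichotomy ξ 0 with hneg | rfl | hpos
  · have hq : 0 ≤ -(1 + 1 / ξ) := by
      linarith [(div_le_iff_of_neg hneg).2 (by linarith : -1 * ξ ≤ 1)]
    -- `log u ≤ u - 1` and `log (1 + ξ u) ≤ ξ u` bound the logarithm by `-(1 + ξ u) < 0`
    have hlog : log u + log (1 + ξ * u) * -(1 + 1 / ξ) ≤ 0 := by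
      have hlog_u := log_le_sub_one_of_pos hu
      have hlog_b : log (1 + ξ * u) * -(1 + 1 / ξ) ≤ ξ * u * -(1 + 1 / ξ) :=
        mul_le_mul_of_nonneg_right (by linarith [log_le_sub_one_of_pos hb]) hq
      have hcoef : ξ * u * -(1 + 1 / ξ) = -(ξ + 1) * u := by field_simp [hneg.ne]
      nlinarith
    simp only [gpKernel, hneg.ne, if_false, mul_div_assoc, ← hu_def]
    calc u * (1 + ξ * u) ^ (-(1 + 1 / ξ))
        = exp (log u + log (1 + ξ * u) * -(1 + 1 / ξ)) := by
          rw [exp_add, exp_log hu, rpow_def_of_pos hb]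
      _ ≤ 1 := exp_le_one_iff.2 hlog
  · simp only [gpKernel, if_true, neg_div, ← hu_def, exp_neg]
    rw [mul_inv_le_iff₀ (exp_pos u), one_mul]
    linarith [add_one_le_exp u]
  · have hp : 1 ≤ 1 + 1 / ξ := le_add_of_nonneg_right (by positivity)
    have hbern := one_add_mul_self_le_rpow_one_add (by nlinarith : -1 ≤ ξ * u) hp
    have hexp : 1 + (1 + 1 / ξ) * (ξ * u) = 1 + ξ * u + u := by field_simp; ring
    simp only [gpKernel, hpos.ne', if_false, mul_div_assoc, ← hu_def]
    rw [rpow_neg hb.le, mul_inv_le_iff₀ (rpow_pos_of_pos hb _), one_mul]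
    nlinarith

lemma inv_mul_gpKernel_le {ξ w M σ : ℝ} (hw : 0 < w) (hwM : w < M)
    (hσ : max 0 (-ξ * M) < σ) : σ⁻¹ * gpKernel ξ w σ ≤ max w⁻¹ (M - w)⁻¹ := by
  have hσ0 : 0 < σ := (le_max_left _ _).trans_lt hσ
  have hb := one_add_mul_div_pos hw hwM.le hσ
  rcases le_or_gt (-1) ξ with hξ | hξ
  · refine le_max_of_le_left ?_
    calc σ⁻¹ * gpKernel ξ w σ = (w / σ * gpKernel ξ w σ) / w := by field_simp
      _ ≤ 1 / w := by gcongr; exact div_mul_gpKernel_le_one hξ hw hσ0 hb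
      _ = w⁻¹ := one_div w
  · refine le_max_of_le_right ?_
    have hb1 : 1 + ξ * w / σ ≤ 1 := by
      have : ξ * w / σ < 0 := div_neg_of_neg_of_pos (by nlinarith) hσ0
      linarith
    have hexp : -1 ≤ -(1 + 1 / ξ) := by
      have : 1 / ξ < 0 := one_div_neg.2 (by linarith)
      linarith
    have hξM : -ξ * M < σ := (le_max_right _ _).trans_lt hσ
    calc σ⁻¹ * gpKernel ξ w σ ≤ σ⁻¹ * (1 + ξ * w / σ) ^ (-1 : ℝ) := by
          simp only [gpKernel, (by linarith : ξ ≠ 0), if_false]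
          exact mul_le_mul_of_nonneg_left (rpow_le_rpow_of_exponent_ge hb hb1 hexp) (by positivity)
      _ = (σ + ξ * w)⁻¹ := by rw [rpow_neg_one, ← mul_inv]; field_simp
      _ ≤ (M - w)⁻¹ := inv_anti₀ (by linarith) (by nlinarith)

lemma setLIntegral_inv_sq_mul_gpKernel_le {ξ M : ℝ} (hM : 0 < M) :
    ∫⁻ σ in Ioi (max 0 (-ξ * M)), ENNReal.ofReal ((σ ^ 2)⁻¹ * gpKernel ξ M σ)
      ≤ ENNReal.ofReal M⁻¹ := by
  refine setLIntegral_Ioi_le_of_hasDerivAt (F := fun σ => gpTail ξ M σ / M)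
    (fun σ hσ => ?_) (fun σ hσ => ?_) (fun σ hσ => ?_) ?_
  · have hσ0 : σ ≠ 0 := ((le_max_left _ _).trans_lt hσ).ne'
    refine ((hasDerivAt_gpTail hσ0 (one_add_mul_div_pos hM le_rfl hσ)).div_const M).congr_deriv ?_
    field_simp
  · have := gpKernel_nonneg (one_add_mul_div_pos hM le_rfl hσ)
    positivity
  · have := gpTail_nonneg (one_add_mul_div_pos hM le_rfl hσ)
    positivity
  · simpa [one_div] using (tendsto_gpTail_atTop ξ M).div_const M

lemma gpInner_integrand_eq (m : ℕ) (z : Fin m → ℝ) (ξ σ : ℝ) :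
    (if ξ = 0 then σ ^ (-((m : ℝ) + 1)) * exp (-(∑ i, z i) / σ)
      else σ ^ (-((m : ℝ) + 1)) * ∏ i, (1 + ξ * z i / σ) ^ (-(1 + 1 / ξ)))
      = σ ^ (-((m : ℝ) + 1)) * ∏ i, gpKernel ξ (z i) σ := by
  split_ifs with hξ
  · simp [gpKernel, hξ, ← exp_sum, Finset.sum_div, neg_div]
  · simp [gpKernel, hξ]

lemma rpow_neg_natCast_add_two {σ : ℝ} (hσ : 0 < σ) (n : ℕ) :
    σ ^ (-(((n + 1 : ℕ) : ℝ) + 1)) = (σ ^ 2)⁻¹ * σ⁻¹ ^ n := by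
  rw [rpow_neg hσ.le, show ((n + 1 : ℕ) : ℝ) + 1 = ((n + 2 : ℕ) : ℝ) by push_cast; ring,
    rpow_natCast, inv_pow, ← mul_inv, ← pow_add, add_comm]

lemma gpInner_le {n : ℕ} {z : Fin (n + 1) → ℝ} (hzpos : ∀ i, 0 < z i) (hzmono : StrictMono z)
    (ξ : ℝ) :
    gpInner (n + 1) z ξ ≤ ENNReal.ofReal
      ((∏ i : Fin n, max (z i.castSucc)⁻¹ (z (Fin.last n) - z i.castSucc)⁻¹) *
        (z (Fin.last n))⁻¹) := by
  set M := z (Fin.last n)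
  have hsup : ⨆ i, z i = M :=
    le_antisymm (ciSup_le fun i => hzmono.monotone (Fin.le_last i))
      (le_ciSup (finite_range z).bddAbove _)
  set K := ∏ i : Fin n, max (z i.castSucc)⁻¹ (M - z i.castSucc)⁻¹
  have hK : 0 ≤ K :=
    Finset.prod_nonneg fun i _ => (inv_nonneg.2 (hzpos _).le).trans (le_max_left _ _)
  have hbound : ∀ σ ∈ Ioi (max 0 (-ξ * M)),
      σ ^ (-(((n + 1 : ℕ) : ℝ) + 1)) * ∏ i, gpKernel ξ (z i) σ
        ≤ K * ((σ ^ 2)⁻¹ * gpKernel ξ M σ) := by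
    intro σ hσ
    have hσ0 : 0 < σ := (le_max_left _ _).trans_lt hσ
    have hzlt : ∀ i : Fin n, z i.castSucc < M := fun i => hzmono (Fin.castSucc_lt_last i)
    rw [rpow_neg_natCast_add_two hσ0, Fin.prod_univ_castSucc]
    calc (σ ^ 2)⁻¹ * σ⁻¹ ^ n * ((∏ i : Fin n, gpKernel ξ (z i.castSucc) σ) * gpKernel ξ M σ)
        = (∏ i : Fin n, σ⁻¹ * gpKernel ξ (z i.castSucc) σ) * ((σ ^ 2)⁻¹ * gpKernel ξ M σ) := by
          rw [Finset.prod_mul_distrib, Finset.prod_const, Finset.card_univ, Fintype.card_fin]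
          ring
      _ ≤ K * ((σ ^ 2)⁻¹ * gpKernel ξ M σ) := by
          have hkM := gpKernel_nonneg (one_add_mul_div_pos (hzpos _) le_rfl hσ)
          refine mul_le_mul_of_nonneg_right (Finset.prod_le_prod (fun i _ => ?_)
            (fun i _ => inv_mul_gpKernel_le (hzpos _) (hzlt i) hσ)) (by positivity)
          have := gpKernel_nonneg (one_add_mul_div_pos (hzpos _) (hzlt i).le hσ)
          positivity
  calc gpInner (n + 1) z ξ
      ≤ ∫⁻ σ in Ioi (max 0 (-ξ * M)),
          ENNReal.ofReal K * ENNReal.ofReal ((σ ^ 2)⁻¹ * gpKernel ξ M σ) := by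
        rw [gpInner, hsup]
        refine setLIntegral_mono' measurableSet_Ioi fun σ hσ => ?_
        rw [gpInner_integrand_eq, ← ENNReal.ofReal_mul hK]
        exact ENNReal.ofReal_le_ofReal (hbound σ hσ)
    _ ≤ ENNReal.ofReal K * ENNReal.ofReal M⁻¹ := by
        rw [lintegral_const_mul' _ _ ENNReal.ofReal_ne_top]
        gcongr
        exact setLIntegral_inv_sq_mul_gpKernel_le (hzpos _)
    _ = ENNReal.ofReal (K * M⁻¹) := (ENNReal.ofReal_mul hK).symm

theorem gp_proper_of_integrable_prior
    (m : ℕ) (hm : 1 ≤ m) (z : Fin m → ℝ)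
    (hzpos : ∀ i, 0 < z i) (hzmono : StrictMono z)
    (p : ℝ → ℝ)
    (hint : (∫⁻ ξ : ℝ, ENNReal.ofReal (p ξ)) < ⊤) :
    gpC m z p < ⊤ := by
  obtain ⟨n, rfl⟩ := Nat.exists_eq_add_of_le' hm
  calc gpC (n + 1) z p
      ≤ ∫⁻ ξ, ENNReal.ofReal (p ξ) * ENNReal.ofReal
          ((∏ i : Fin n, max (z i.castSucc)⁻¹ (z (Fin.last n) - z i.castSucc)⁻¹) *
            (z (Fin.last n))⁻¹) :=
        lintegral_mono fun ξ => mul_le_mul_right (gpInner_le hzpos hzmono ξ) _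
    _ < ⊤ := by
        rw [lintegral_mul_const' _ _ ENNReal.ofReal_ne_top]
        exact ENNReal.mul_lt_top hint ENNReal.ofReal_lt_top
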